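/- Let x ∈ ℂ with x ≠ 0, and suppose x is not an eigenvalue of Q₁. Then x is an eigenvalue of Q̂₁ if and only if det(𝒟⁻¹ + x·𝐔ᴴ·G(x)·𝐔) = 0. -/

import Mathlib

open Matrix

noncomputable section

/-- Spiked diagonal entries: `â_k = a_k (1 + d_k)` for `k < r` (0-indexed) and
`â_k = a_k` otherwise. -/
def hatEntries (N r : ℕ) (a d : Fin N → ℝ) : Fin N → ℝ :=
  fun k => if (k : ℕ) < r then a k * (1 + d k) else a k

/-- The diagonal matrix `A^{1/2}` with entries `√(a_i)`. -/
def sqrtDiag (N : ℕ) (a : Fin N → ℝ) : Matrix (Fin N) (Fin N) ℂ :=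
  Matrix.diagonal fun i => ((Real.sqrt (a i) : ℝ) : ℂ)

/-- `Y = A^{1/2} U B^{1/2}`. -/
def Ymat (N : ℕ) (a b : Fin N → ℝ) (U : Matrix (Fin N) (Fin N) ℂ) :
    Matrix (Fin N) (Fin N) ℂ :=
  sqrtDiag N a * U * sqrtDiag N b

/-- The linearization `H(x) = [[0, w·Y],[w·Yᴴ, 0]]`, where `w² = x`. -/
def Hlin (N : ℕ) (Y : Matrix (Fin N) (Fin N) ℂ) (w : ℂ) :
    Matrix (Fin N ⊕ Fin N) (Fin N ⊕ Fin N) ℂ :=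
  Matrix.fromBlocks 0 (w • Y) (w • Yᴴ) 0

/-- The `2N × (r+s)` matrix `𝐔` whose columns are `e₁,…,e_r` and `e_{N+1},…,e_{N+s}`. -/
def Umat (N r s : ℕ) : Matrix (Fin N ⊕ Fin N) (Fin r ⊕ Fin s) ℂ :=
  Matrix.fromBlocks (fun i i' => if (i : ℕ) = (i' : ℕ) then 1 else 0) 0 0
    (fun j j' => if (j : ℕ) = (j' : ℕ) then 1 else 0)

/-- The `(r+s) × (r+s)` diagonal matrix `𝒟` with entries `d_i^a/(1+d_i^a)` and
`d_j^b/(1+d_j^b)`. -/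
def Dmat (N r s : ℕ) (hr : r ≤ N) (hs : s ≤ N) (da db : Fin N → ℝ) :
    Matrix (Fin r ⊕ Fin s) (Fin r ⊕ Fin s) ℂ :=
  Matrix.diagonal (Sum.elim
    (fun i : Fin r =>
      ((da (Fin.castLE hr i) / (1 + da (Fin.castLE hr i)) : ℝ) : ℂ))
    (fun j : Fin s =>
      ((db (Fin.castLE hs j) / (1 + db (Fin.castLE hs j)) : ℝ) : ℂ)))

/-- The `2N × 2N` diagonal matrix `P` with entries `(1+d_i^a)^{1/2}` (`i < r`), `1`
(`r ≤ i < N`), `(1+d_j^b)^{1/2}` (`j < s`), `1` (`s ≤ j < N`). -/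
def Pmat (N r s : ℕ) (da db : Fin N → ℝ) :
    Matrix (Fin N ⊕ Fin N) (Fin N ⊕ Fin N) ℂ :=
  Matrix.diagonal (Sum.elim
    (fun i : Fin N =>
      ((Real.sqrt (1 + if (i : ℕ) < r then da i else 0) : ℝ) : ℂ))
    (fun j : Fin N =>
      ((Real.sqrt (1 + if (j : ℕ) < s then db j else 0) : ℝ) : ℂ)))

/-- The `(r+s) × (r+s)` diagonal matrix `(I − 𝒟)^{1/2}` with entries `(1+d_i^a)^{-1/2}`
and `(1+d_j^b)^{-1/2}`. -/
def Emat (N r s : ℕ) (hr : r ≤ N) (hs : s ≤ N) (da db : Fin N → ℝ) :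
    Matrix (Fin r ⊕ Fin s) (Fin r ⊕ Fin s) ℂ :=
  Matrix.diagonal (Sum.elim
    (fun i : Fin r => (((Real.sqrt (1 + da (Fin.castLE hr i)))⁻¹ : ℝ) : ℂ))
    (fun j : Fin s => (((Real.sqrt (1 + db (Fin.castLE hs j)))⁻¹ : ℝ) : ℂ)))

/-! The spike acts by diagonal conjugation, `Ŷ = P_a Y P_b` with `P = diag(√(1 + d))`, hence
`Ĥ(x) - x = P (H(x) - x + x 𝐔𝒟𝐔ᴴ) P` because `P (1 - 𝐔𝒟𝐔ᴴ) P = 1`. A Schur complement gives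
`det(H(x) - x) = (-x)^N det(Q₁ - x)`, and likewise for `Ĥ` and `Q̂₁`, while the matrix determinant
lemma turns the rank-`(r+s)` perturbation into `det(H(x) - x) · det 𝒟 · det(𝒟⁻¹ + x 𝐔ᴴ G(x) 𝐔)`.
All prefactors are nonzero because `x ≠ 0` is not an eigenvalue of `Q₁`. -/

theorem exists_mulVec_eq_smul_iff_det_sub_eq_zero {n K : Type*} [Fintype n] [DecidableEq n]
    [Field K] (A : Matrix n n K) (x : K) :
    (∃ v : n → K, v ≠ 0 ∧ A *ᵥ v = x • v) ↔ (A - x • 1).det = 0 := by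
  simp only [← exists_mulVec_eq_zero_iff, sub_mulVec, smul_mulVec, one_mulVec, sub_eq_zero]

theorem det_add_mul_mul_of_isUnit {m n K : Type*} [Fintype m] [DecidableEq m] [Fintype n]
    [DecidableEq n] [Field K] {A : Matrix m m K} {D : Matrix n n K} (U : Matrix m n K)
    (V : Matrix n m K) (hA : IsUnit A.det) (hD : IsUnit D.det) :
    (A + U * D * V).det = A.det * D.det * (D⁻¹ + V * A⁻¹ * U).det := by
  have hfactor : 1 + D * V * A⁻¹ * U = D * (D⁻¹ + V * A⁻¹ * U) := by
    rw [Matrix.mul_add, mul_nonsing_inv D hD, Matrix.mul_assoc D, Matrix.mul_assoc D]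
  rw [Matrix.mul_assoc U, det_add_mul _ _ hA, hfactor, det_mul, mul_assoc]

theorem det_Hlin_sub_smul_one {N : ℕ} (Y : Matrix (Fin N) (Fin N) ℂ) {x w : ℂ} (hx : x ≠ 0)
    (hw : w ^ 2 = x) :
    (Hlin N Y w - x • 1).det = (-x) ^ N * (Y * Yᴴ - x • 1).det := by
  have hblocks : Hlin N Y w - x • 1 = fromBlocks (-x • 1) (w • Y) (w • Yᴴ) (-x • 1) := by
    rw [Hlin, ← fromBlocks_one, fromBlocks_smul, sub_eq_add_neg, fromBlocks_neg, fromBlocks_add]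
    simp only [zero_add, add_zero, smul_zero, neg_zero, neg_smul]
  let _ : Invertible (-x • 1 : Matrix (Fin N) (Fin N) ℂ) :=
    invertibleOfLeftInverse _ ((-x)⁻¹ • 1) (by simp [smul_smul, hx])
  have hschur : w • Y * ⅟(-x • 1 : Matrix (Fin N) (Fin N) ℂ) * (w • Yᴴ) = -(Y * Yᴴ) := by
    have hscalar : w * (-x)⁻¹ * w = -1 := by
      rw [mul_right_comm, ← sq, hw, inv_neg, mul_neg, mul_inv_cancel₀ hx]
    change w • Y * ((-x)⁻¹ • 1) * (w • Yᴴ) = -(Y * Yᴴ)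
    rw [smul_mul_smul_comm, Matrix.mul_one, smul_mul_smul_comm, hscalar, neg_one_smul]
  rw [hblocks, det_fromBlocks₂₂, hschur, det_smul, det_one, Fintype.card_fin, mul_one,
    sub_neg_eq_add, neg_smul, add_comm, ← sub_eq_add_neg]

theorem sqrtDiag_conjTranspose (N : ℕ) (a : Fin N → ℝ) : (sqrtDiag N a)ᴴ = sqrtDiag N a := by
  simp [sqrtDiag, diagonal_conjTranspose]

theorem sqrtDiag_mul {N : ℕ} (a : Fin N → ℝ) {c : Fin N → ℝ} (hc : ∀ i, 0 ≤ c i) :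
    sqrtDiag N (a * c) = sqrtDiag N a * sqrtDiag N c := by
  simp only [sqrtDiag, diagonal_mul_diagonal, Pi.mul_apply, Real.sqrt_mul' _ (hc _),
    Complex.ofReal_mul]

theorem Hlin_mul_mul {N : ℕ} (Y D₁ D₂ : Matrix (Fin N) (Fin N) ℂ) (w : ℂ) (h₁ : D₁ᴴ = D₁)
    (h₂ : D₂ᴴ = D₂) :
    Hlin N (D₁ * Y * D₂) w = fromBlocks D₁ 0 0 D₂ * Hlin N Y w * fromBlocks D₁ 0 0 D₂ := by
  simp [Hlin, fromBlocks_multiply, conjTranspose_mul, h₁, h₂, Matrix.mul_assoc]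

def spikeDelta (N r : ℕ) (d : Fin N → ℝ) : Fin N → ℝ :=
  fun i => if (i : ℕ) < r then d i else 0

theorem spikeDelta_nonneg {N r : ℕ} {d : Fin N → ℝ} (hd : ∀ i : Fin N, (i : ℕ) < r → 0 < d i)
    (i : Fin N) : 0 ≤ spikeDelta N r d i := by
  unfold spikeDelta
  split_ifs with h
  exacts [(hd i h).le, le_rfl]

theorem hatEntries_eq_mul {N r : ℕ} (a d : Fin N → ℝ) :
    hatEntries N r a d = a * (1 + spikeDelta N r d) := by
  ext i
  by_cases h : (i : ℕ) < r <;> simp [hatEntries, spikeDelta, h]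

theorem sqrtDiag_hatEntries {N r : ℕ} (a : Fin N → ℝ) {d : Fin N → ℝ}
    (hd : ∀ i : Fin N, (i : ℕ) < r → 0 < d i) :
    sqrtDiag N (hatEntries N r a d) = sqrtDiag N a * sqrtDiag N (1 + spikeDelta N r d) := by
  rw [hatEntries_eq_mul, sqrtDiag_mul]
  exact fun i => add_nonneg zero_le_one (spikeDelta_nonneg hd i)

theorem Ymat_hatEntries {N r s : ℕ} (a b da db : Fin N → ℝ) (U : Matrix (Fin N) (Fin N) ℂ)
    (hda : ∀ i : Fin N, (i : ℕ) < r → 0 < da i) (hdb : ∀ j : Fin N, (j : ℕ) < s → 0 < db j) :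
    Ymat N (hatEntries N r a da) (hatEntries N s b db) U
      = sqrtDiag N (1 + spikeDelta N r da) * Ymat N a b U *
          sqrtDiag N (1 + spikeDelta N s db) := by
  rw [Ymat, Ymat, sqrtDiag_hatEntries a hda, sqrtDiag_hatEntries b hdb, sqrtDiag,
    sqrtDiag, (commute_diagonal _ _).eq]
  simp only [Matrix.mul_assoc]

theorem Pmat_eq_fromBlocks (N r s : ℕ) (da db : Fin N → ℝ) :
    Pmat N r s da db = fromBlocks (sqrtDiag N (1 + spikeDelta N r da)) 0 0
      (sqrtDiag N (1 + spikeDelta N s db)) := by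
  rw [sqrtDiag, sqrtDiag, fromBlocks_diagonal]
  rfl

theorem Hlin_hat {N r s : ℕ} (a b da db : Fin N → ℝ) (U : Matrix (Fin N) (Fin N) ℂ) (w : ℂ)
    (hda : ∀ i : Fin N, (i : ℕ) < r → 0 < da i) (hdb : ∀ j : Fin N, (j : ℕ) < s → 0 < db j) :
    Hlin N (Ymat N (hatEntries N r a da) (hatEntries N s b db) U) w
      = Pmat N r s da db * Hlin N (Ymat N a b U) w * Pmat N r s da db := by
  rw [Ymat_hatEntries a b da db U hda hdb, Hlin_mul_mul _ _ _ _ (sqrtDiag_conjTranspose _ _)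
    (sqrtDiag_conjTranspose _ _), Pmat_eq_fromBlocks]

theorem isUnit_det_Pmat {N r s : ℕ} {da db : Fin N → ℝ}
    (hda : ∀ i : Fin N, (i : ℕ) < r → 0 < da i) (hdb : ∀ j : Fin N, (j : ℕ) < s → 0 < db j) :
    IsUnit (Pmat N r s da db).det := by
  rw [isUnit_iff_ne_zero, Pmat, det_diagonal, Finset.prod_ne_zero_iff]
  rintro (i | j) -
  · exact Complex.ofReal_ne_zero.2 <| Real.sqrt_ne_zero'.2 <|
      add_pos_of_pos_of_nonneg one_pos (spikeDelta_nonneg hda i)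
  · exact Complex.ofReal_ne_zero.2 <| Real.sqrt_ne_zero'.2 <|
      add_pos_of_pos_of_nonneg one_pos (spikeDelta_nonneg hdb j)

def colEmbed (N r : ℕ) : Matrix (Fin N) (Fin r) ℂ :=
  fun i i' => if (i : ℕ) = (i' : ℕ) then 1 else 0

theorem colEmbed_mul_diagonal_mul_conjTranspose {N r : ℕ} (hr : r ≤ N) (f : Fin N → ℂ) :
    colEmbed N r * diagonal (fun k => f (Fin.castLE hr k)) * (colEmbed N r)ᴴ
      = diagonal fun i : Fin N => if (i : ℕ) < r then f i else 0 := by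
  ext p q
  rw [mul_apply]
  simp only [mul_diagonal, conjTranspose_apply, colEmbed, diagonal_apply]
  by_cases hp : (p : ℕ) < r
  · rw [Fintype.sum_eq_single ⟨p, hp⟩]
    · rcases eq_or_ne p q with rfl | hpq
      · simp [hp]
      · simp [hpq, Fin.val_ne_of_ne hpq.symm]
    · intro k hk
      have hpk : (p : ℕ) ≠ k := fun h => hk (Fin.ext h.symm)
      simp [hpk]
  · refine (Finset.sum_eq_zero fun k _ => ?_).trans (by simp [hp])
    simp [show (p : ℕ) ≠ k by omega]

def spikeRatio (N r : ℕ) (d : Fin N → ℝ) : Fin N → ℂ :=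
  fun i => ((spikeDelta N r d i / (1 + spikeDelta N r d i) : ℝ) : ℂ)

theorem colEmbed_mul_diagonal_mul_conjTranspose_ratio {N r : ℕ} (hr : r ≤ N) (d : Fin N → ℝ) :
    colEmbed N r * diagonal (fun k => ((d (Fin.castLE hr k) / (1 + d (Fin.castLE hr k)) : ℝ) : ℂ))
      * (colEmbed N r)ᴴ = diagonal (spikeRatio N r d) := by
  rw [colEmbed_mul_diagonal_mul_conjTranspose hr (fun i => ((d i / (1 + d i) : ℝ) : ℂ))]
  congr 1
  ext i
  by_cases h : (i : ℕ) < r <;> simp [spikeRatio, spikeDelta, h]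

theorem Umat_mul_Dmat_mul_conjTranspose {N r s : ℕ} (hr : r ≤ N) (hs : s ≤ N)
    (da db : Fin N → ℝ) :
    Umat N r s * Dmat N r s hr hs da db * (Umat N r s)ᴴ
      = diagonal (Sum.elim (spikeRatio N r da) (spikeRatio N s db)) := by
  rw [show Umat N r s = fromBlocks (colEmbed N r) 0 0 (colEmbed N s) from rfl, Dmat,
    ← fromBlocks_diagonal, fromBlocks_conjTranspose, fromBlocks_multiply, fromBlocks_multiply]
  simp only [Matrix.mul_zero, Matrix.zero_mul, add_zero, zero_add, conjTranspose_zero]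
  rw [colEmbed_mul_diagonal_mul_conjTranspose_ratio, colEmbed_mul_diagonal_mul_conjTranspose_ratio,
    fromBlocks_diagonal]

theorem isUnit_det_Dmat {N r s : ℕ} (hr : r ≤ N) (hs : s ≤ N) {da db : Fin N → ℝ}
    (hda : ∀ i : Fin N, (i : ℕ) < r → 0 < da i) (hdb : ∀ j : Fin N, (j : ℕ) < s → 0 < db j) :
    IsUnit (Dmat N r s hr hs da db).det := by
  rw [isUnit_iff_ne_zero, Dmat, det_diagonal, Finset.prod_ne_zero_iff]
  rintro (i | j) -
  · have := hda (Fin.castLE hr i) i.isLt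
    simp only [Sum.elim_inl, ne_eq, Complex.ofReal_eq_zero]
    positivity
  · have := hdb (Fin.castLE hs j) j.isLt
    simp only [Sum.elim_inr, ne_eq, Complex.ofReal_eq_zero]
    positivity

theorem ofReal_sqrt_mul_one_sub_div_mul_sqrt {e : ℝ} (he : 0 ≤ e) :
    ((√(1 + e) : ℝ) : ℂ) * (1 - ((e / (1 + e) : ℝ) : ℂ)) * ((√(1 + e) : ℝ) : ℂ) = 1 := by
  have hpos : (0 : ℝ) < 1 + e := by linarith
  have hne : (1 + e : ℂ) ≠ 0 := by exact_mod_cast hpos.ne'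
  rw [mul_right_comm, ← Complex.ofReal_mul, Real.mul_self_sqrt hpos.le]
  push_cast
  field_simp
  ring

theorem Pmat_mul_one_sub_mul_Pmat {N r s : ℕ} (hr : r ≤ N) (hs : s ≤ N) {da db : Fin N → ℝ}
    (hda : ∀ i : Fin N, (i : ℕ) < r → 0 < da i) (hdb : ∀ j : Fin N, (j : ℕ) < s → 0 < db j) :
    Pmat N r s da db * (1 - Umat N r s * Dmat N r s hr hs da db * (Umat N r s)ᴴ)
      * Pmat N r s da db = 1 := by
  rw [Umat_mul_Dmat_mul_conjTranspose, ← diagonal_one, diagonal_sub, Pmat,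
    diagonal_mul_diagonal, diagonal_mul_diagonal]
  congr 1
  ext (i | j)
  · exact ofReal_sqrt_mul_one_sub_div_mul_sqrt (spikeDelta_nonneg hda i)
  · exact ofReal_sqrt_mul_one_sub_div_mul_sqrt (spikeDelta_nonneg hdb j)

theorem Hlin_hat_sub_smul_one {N r s : ℕ} (hr : r ≤ N) (hs : s ≤ N) (a b da db : Fin N → ℝ)
    (U : Matrix (Fin N) (Fin N) ℂ) (x w : ℂ) (hda : ∀ i : Fin N, (i : ℕ) < r → 0 < da i)
    (hdb : ∀ j : Fin N, (j : ℕ) < s → 0 < db j) :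
    Hlin N (Ymat N (hatEntries N r a da) (hatEntries N s b db) U) w - x • 1
      = Pmat N r s da db * (Hlin N (Ymat N a b U) w - x • 1
          + Umat N r s * Dmat N r s hr hs da db * (x • (Umat N r s)ᴴ)) * Pmat N r s da db := by
  rw [Hlin_hat a b da db U w hda hdb]
  conv_lhs => rw [← Pmat_mul_one_sub_mul_Pmat hr hs hda hdb]
  simp only [Matrix.mul_sub, Matrix.sub_mul, Matrix.mul_add, Matrix.add_mul, Matrix.mul_smul,
    Matrix.smul_mul, Matrix.mul_one, smul_sub]
  abel

theorem spiked_eigenvalue_master_equation_general (N r s : ℕ)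
    (hr : r ≤ N) (hs : s ≤ N)
    (a b da db : Fin N → ℝ)
    (hda : ∀ i : Fin N, (i : ℕ) < r → 0 < da i)
    (hdb : ∀ j : Fin N, (j : ℕ) < s → 0 < db j)
    (U : Matrix (Fin N) (Fin N) ℂ)
    (x w : ℂ) (hx : x ≠ 0) (hw : w ^ 2 = x)
    (hev : ∀ v : Fin N → ℂ,
      (Ymat N a b U * (Ymat N a b U)ᴴ) *ᵥ v = x • v → v = 0) :
    (∃ v : Fin N → ℂ, v ≠ 0 ∧
        (Ymat N (hatEntries N r a da) (hatEntries N s b db) U *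
          (Ymat N (hatEntries N r a da) (hatEntries N s b db) U)ᴴ) *ᵥ v = x • v) ↔
      ((Dmat N r s hr hs da db)⁻¹ +
        x • ((Umat N r s)ᴴ *
          (Hlin N (Ymat N a b U) w -
            x • (1 : Matrix (Fin N ⊕ Fin N) (Fin N ⊕ Fin N) ℂ))⁻¹ *
          Umat N r s)).det = 0 := by
  have hxN : (-x) ^ N ≠ 0 := pow_ne_zero N (neg_ne_zero.2 hx)
  have hY : (Ymat N a b U * (Ymat N a b U)ᴴ - x • 1).det ≠ 0 := fun h =>
    let ⟨v, hv, hvx⟩ := (exists_mulVec_eq_smul_iff_det_sub_eq_zero _ x).2 h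
    hv (hev v hvx)
  have hH : IsUnit (Hlin N (Ymat N a b U) w - x • 1).det := by
    rw [isUnit_iff_ne_zero, det_Hlin_sub_smul_one _ hx hw]
    exact mul_ne_zero hxN hY
  have hD := isUnit_det_Dmat hr hs hda hdb
  have hP := isUnit_det_Pmat hda hdb (r := r) (s := s)
  have hfactor : (-x) ^ N * (Ymat N (hatEntries N r a da) (hatEntries N s b db) U *
        (Ymat N (hatEntries N r a da) (hatEntries N s b db) U)ᴴ - x • 1).det
      = ((Pmat N r s da db).det ^ 2 * (Hlin N (Ymat N a b U) w - x • 1).det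
          * (Dmat N r s hr hs da db).det) *
        ((Dmat N r s hr hs da db)⁻¹ + x • ((Umat N r s)ᴴ *
          (Hlin N (Ymat N a b U) w - x • 1)⁻¹ * Umat N r s)).det := by
    rw [← det_Hlin_sub_smul_one _ hx hw, Hlin_hat_sub_smul_one hr hs a b da db U x w hda hdb,
      det_mul, det_mul, det_add_mul_mul_of_isUnit _ _ hH hD, Matrix.smul_mul, Matrix.smul_mul]
    ring
  rw [exists_mulVec_eq_smul_iff_det_sub_eq_zero, ← mul_eq_zero_iff_left hxN, hfactor,
    mul_eq_zero_iff_left (by simp [hP.ne_zero, hH.ne_zero, hD.ne_zero])]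

/-- If `x ≠ 0` is not an eigenvalue of `Q₁`, then `x` is an eigenvalue
of `Q̂₁` if and only if `det(𝒟⁻¹ + x·𝐔ᴴ·G(x)·𝐔) = 0`. -/
theorem spiked_eigenvalue_master_equation (N r s : ℕ)
    (hN : 0 < N) (hrpos : 0 < r) (hspos : 0 < s) (hr : r ≤ N) (hs : s ≤ N)
    (a b da db : Fin N → ℝ)
    (ha : ∀ i, 0 < a i) (hb : ∀ i, 0 < b i)
    (hda : ∀ i : Fin N, (i : ℕ) < r → 0 < da i)
    (hdb : ∀ j : Fin N, (j : ℕ) < s → 0 < db j)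
    (U : Matrix (Fin N) (Fin N) ℂ) (hU : U ∈ Matrix.unitaryGroup (Fin N) ℂ)
    (x w : ℂ) (hx : x ≠ 0) (hw : w ^ 2 = x)
    (hev : ∀ v : Fin N → ℂ,
      (Ymat N a b U * (Ymat N a b U)ᴴ) *ᵥ v = x • v → v = 0) :
    (∃ v : Fin N → ℂ, v ≠ 0 ∧
        (Ymat N (hatEntries N r a da) (hatEntries N s b db) U *
          (Ymat N (hatEntries N r a da) (hatEntries N s b db) U)ᴴ) *ᵥ v = x • v) ↔
      ((Dmat N r s hr hs da db)⁻¹ +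
        x • ((Umat N r s)ᴴ *
          (Hlin N (Ymat N a b U) w -
            x • (1 : Matrix (Fin N ⊕ Fin N) (Fin N ⊕ Fin N) ℂ))⁻¹ *
          Umat N r s)).det = 0 :=
  spiked_eigenvalue_master_equation_general N r s hr hs a b da db hda hdb U x w hx hw hev
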